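/- Let V be a nonzero finite-dimensional real vector space and θ a linear endomorphism of V with ker(θ − id) = 0 (as holds for the operator θ of a regular Φ-space). Let ν be the minimal polynomial of θ, let s̃ be the number of distinct monic irreducible factors of ν over ℝ, and let s be the number of those factors that have degree 2. Then: (1) the set {P ∈ ℝ[θ] : P² = id} has exactly 2^s̃ elements; (2) there exists J ∈ ℝ[θ] with J² = −id if and only if s = s̃, and in that case {J ∈ ℝ[θ] : J² = −id} has exactly 2^s elements; (3) the set {f ∈ ℝ[θ] : f³ + f = 0 and f ≠ 0} has exactly 3^s − 1 elements, and if s = s̃ then exactly 2^s of these satisfy f² = −id while the remaining 3^s − 2^s − 1 have nonzero kernel; (4) the set {h ∈ ℝ[θ] : h³ = h} has exactly 3^s̃ elements. -/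

import Mathlib

open UniqueFactorizationMonoid Polynomial

/-!
ℝ[θ] ≅ ℝ[X]/(ν), and by the Chinese remainder theorem ℝ[X]/(ν) is the product of the local rings
ℝ[X]/(p^k) over the primary factors p^k of ν. In each of them 2 is invertible, so x² = 1 and
x³ = x have exactly the solutions ±1 and 0, ±1, and x² = −1 has either no solution or exactly
two, ±j. There is none when deg p = 1 (evaluate at the root of p). When deg p = 2, p has
negative discriminant, which gives a square root of −1 modulo p; it lifts modulo p^k by Newton's
method because p is nilpotent there. The counts are products of these local counts.
-/

namespace IsLocalRing

variable {R : Type*} [CommRing R] [IsLocalRing R]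

theorem eq_zero_or_eq_zero_of_mul_eq_zero_of_isUnit {x y : R} (a b : R) (h : x * y = 0)
    (hu : IsUnit (a * x + b * y)) : x = 0 ∨ y = 0 := by
  rcases isUnit_or_isUnit_of_isUnit_add hu with hx | hy
  · exact Or.inr ((isUnit_of_mul_isUnit_right hx).mul_right_eq_zero.mp h)
  · exact Or.inl ((isUnit_of_mul_isUnit_right hy).mul_left_eq_zero.mp h)

theorem sq_eq_sq_iff {a x : R} (h2 : IsUnit (2 : R)) (ha : IsUnit a) :
    x ^ 2 = a ^ 2 ↔ x = a ∨ x = -a := by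
  refine ⟨fun h => ?_, by rintro (rfl | rfl) <;> ring⟩
  have hu : IsUnit (-1 * (x - a) + 1 * (x + a)) := by
    convert h2.mul ha using 1; ring
  rcases eq_zero_or_eq_zero_of_mul_eq_zero_of_isUnit _ _ (by linear_combination h) hu with h | h
  exacts [Or.inl (sub_eq_zero.mp h), Or.inr (eq_neg_of_add_eq_zero_left h)]

theorem ne_neg_self {a : R} (h2 : IsUnit (2 : R)) (ha : IsUnit a) : a ≠ -a := by
  intro h
  have h0 : 2 * a = 0 := by linear_combination h
  exact not_isUnit_zero (h0 ▸ h2.mul ha)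

theorem ncard_setOf_sq_eq_sq {a : R} (h2 : IsUnit (2 : R)) (ha : IsUnit a) :
    {x : R | x ^ 2 = a ^ 2}.ncard = 2 := by
  have hset : {x : R | x ^ 2 = a ^ 2} = {a, -a} := by ext x; exact sq_eq_sq_iff h2 ha
  rw [hset, Set.ncard_pair (ne_neg_self h2 ha)]

theorem sq_eq_one_iff {x : R} (h2 : IsUnit (2 : R)) : x ^ 2 = 1 ↔ x = 1 ∨ x = -1 := by
  simpa using sq_eq_sq_iff (x := x) h2 isUnit_one

theorem ncard_setOf_sq_eq_one (h2 : IsUnit (2 : R)) : {x : R | x ^ 2 = 1}.ncard = 2 := by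
  simpa using ncard_setOf_sq_eq_sq h2 isUnit_one

theorem pow_three_eq_self_iff {x : R} : x ^ 3 = x ↔ x = 0 ∨ x ^ 2 = 1 := by
  refine ⟨fun h => ?_, by rintro (rfl | h) <;> [ring; linear_combination x * h]⟩
  refine (eq_zero_or_eq_zero_of_mul_eq_zero_of_isUnit x (-1) (y := x ^ 2 - 1)
    (by linear_combination h) (by ring_nf; exact isUnit_one)).imp id sub_eq_zero.mp

theorem pow_three_add_self_eq_zero_iff {x : R} : x ^ 3 + x = 0 ↔ x = 0 ∨ x ^ 2 = -1 := by
  refine ⟨fun h => ?_, by rintro (rfl | h) <;> [ring; linear_combination x * h]⟩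
  refine (eq_zero_or_eq_zero_of_mul_eq_zero_of_isUnit (-x) 1 (y := x ^ 2 + 1)
    (by linear_combination h) (by ring_nf; exact isUnit_one)).imp id eq_neg_of_add_eq_zero_left

theorem ncard_setOf_pow_three_eq_self (h2 : IsUnit (2 : R)) : {x : R | x ^ 3 = x}.ncard = 3 := by
  refine Set.ncard_eq_three.mpr ⟨0, 1, -1, zero_ne_one, (neg_ne_zero.mpr one_ne_zero).symm,
    ne_neg_self h2 isUnit_one, ?_⟩
  ext x
  simp [pow_three_eq_self_iff, sq_eq_one_iff h2]

theorem ncard_setOf_sq_eq_neg_one {j : R} (h2 : IsUnit (2 : R)) (hj : j ^ 2 = -1) :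
    {x : R | x ^ 2 = -1}.ncard = 2 := by
  rw [← hj]
  exact ncard_setOf_sq_eq_sq h2 (.of_mul_eq_one (-j) (by linear_combination -hj))

open scoped Classical in
theorem ncard_setOf_pow_three_add_self_eq_zero (h2 : IsUnit (2 : R)) :
    {x : R | x ^ 3 + x = 0}.ncard = if ∃ j : R, j ^ 2 = -1 then 3 else 1 := by
  have hset : {x : R | x ^ 3 + x = 0} = insert 0 {x | x ^ 2 = -1} := by
    ext x; exact pow_three_add_self_eq_zero_iff
  have h0 : (0 : R) ∉ {x | x ^ 2 = -1} := by simp [eq_comm (a := (0 : R))]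
  split_ifs with hj
  · obtain ⟨j, hj⟩ := hj
    have hfin : {x : R | x ^ 2 = -1}.Finite :=
      Set.finite_of_ncard_ne_zero (by rw [ncard_setOf_sq_eq_neg_one h2 hj]; norm_num)
    rw [hset, Set.ncard_insert_of_notMem h0 hfin, ncard_setOf_sq_eq_neg_one h2 hj]
  · push Not at hj
    simp [hset, hj]

end IsLocalRing

section Pi

variable {ι : Type*} {R : ι → Type*}

theorem Pi.exists_sq_eq_neg_one_iff [∀ i, Ring (R i)] :
    (∃ x : ∀ i, R i, x ^ 2 = -1) ↔ ∀ i, ∃ y : R i, y ^ 2 = -1 := by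
  refine ⟨fun ⟨x, hx⟩ i => ⟨x i, congrFun hx i⟩, fun h => ?_⟩
  choose y hy using h
  exact ⟨y, funext hy⟩

variable [Fintype ι]

theorem Set.ncard_setOf_forall_apply (Q : ∀ i, R i → Prop) :
    {x : ∀ i, R i | ∀ i, Q i (x i)}.ncard = ∏ i, {y | Q i y}.ncard := by
  simp_rw [← Nat.card_coe_set_eq]
  exact (Nat.card_congr Equiv.subtypePiEquivPi).trans Nat.card_pi

variable [∀ i, CommRing (R i)] [∀ i, IsLocalRing (R i)]

theorem Pi.ncard_setOf_sq_eq_one (h2 : ∀ i, IsUnit (2 : R i)) :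
    {x : ∀ i, R i | x ^ 2 = 1}.ncard = 2 ^ Fintype.card ι := by
  simp only [funext_iff, Pi.pow_apply, Pi.one_apply]
  refine (Set.ncard_setOf_forall_apply fun _ y => y ^ 2 = 1).trans ?_
  simp [IsLocalRing.ncard_setOf_sq_eq_one (h2 _)]

theorem Pi.ncard_setOf_pow_three_eq_self (h2 : ∀ i, IsUnit (2 : R i)) :
    {x : ∀ i, R i | x ^ 3 = x}.ncard = 3 ^ Fintype.card ι := by
  simp only [funext_iff, Pi.pow_apply]
  refine (Set.ncard_setOf_forall_apply fun _ y => y ^ 3 = y).trans ?_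
  simp [IsLocalRing.ncard_setOf_pow_three_eq_self (h2 _)]

theorem Pi.ncard_setOf_sq_eq_neg_one (h2 : ∀ i, IsUnit (2 : R i))
    (hJ : ∀ i, ∃ j : R i, j ^ 2 = -1) :
    {x : ∀ i, R i | x ^ 2 = -1}.ncard = 2 ^ Fintype.card ι := by
  choose j hj using hJ
  simp only [funext_iff, Pi.pow_apply, Pi.neg_apply, Pi.one_apply]
  refine (Set.ncard_setOf_forall_apply fun _ y => y ^ 2 = -1).trans ?_
  simp [IsLocalRing.ncard_setOf_sq_eq_neg_one (h2 _) (hj _)]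

open scoped Classical in
theorem Pi.ncard_setOf_pow_three_add_self_eq_zero (h2 : ∀ i, IsUnit (2 : R i)) :
    {x : ∀ i, R i | x ^ 3 + x = 0}.ncard = ∏ i, if ∃ j : R i, j ^ 2 = -1 then 3 else 1 := by
  simp only [funext_iff, Pi.pow_apply, Pi.add_apply, Pi.zero_apply]
  refine (Set.ncard_setOf_forall_apply fun _ y => y ^ 3 + y = 0).trans ?_
  simp only [IsLocalRing.ncard_setOf_pow_three_add_self_eq_zero (h2 _)]

end Pi

section PowThreeAddSelf

variable {B : Type*} [CommRing B]

theorem setOf_pow_three_add_self_eq_zero_and_sq_eq_neg_one :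
    {x : B | x ^ 3 + x = 0 ∧ x ^ 2 = -1} = {x | x ^ 2 = -1} :=
  Set.ext fun x => and_iff_right_of_imp fun h => by linear_combination x * h

theorem ncard_setOf_pow_three_add_self_eq_zero_and_ne_zero :
    {x : B | x ^ 3 + x = 0 ∧ x ≠ 0}.ncard = {x : B | x ^ 3 + x = 0}.ncard - 1 := by
  rw [← Set.ncard_sdiff_singleton_of_mem (s := {x : B | x ^ 3 + x = 0}) (a := 0) (by simp)]
  rfl

theorem ncard_setOf_pow_three_add_self_eq_zero_and_ne_zero_and_sq_ne_neg_one [Nontrivial B]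
    (hU : {x : B | x ^ 2 = -1}.Finite) :
    {x : B | x ^ 3 + x = 0 ∧ x ≠ 0 ∧ x ^ 2 ≠ -1}.ncard =
      {x : B | x ^ 3 + x = 0}.ncard - {x : B | x ^ 2 = -1}.ncard - 1 := by
  have hsub : insert 0 {x : B | x ^ 2 = -1} ⊆ {x | x ^ 3 + x = 0} :=
    Set.insert_subset (by simp) fun x (hx : x ^ 2 = -1) =>
      show x ^ 3 + x = 0 by linear_combination x * hx
  have h0 : (0 : B) ∉ {x : B | x ^ 2 = -1} := by simp
  rw [Nat.sub_sub, ← Set.ncard_insert_of_notMem h0 hU, ← Set.ncard_sdiff hsub (hU.insert 0)]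
  congr 1
  ext x
  simp

end PowThreeAddSelf

theorem isUnit_iff_sq_eq_neg_one_of_pow_three_add_self_eq_zero {R : Type*} [Ring R] {x : R}
    (h : x ^ 3 + x = 0) : IsUnit x ↔ x ^ 2 = -1 := by
  refine ⟨fun hx => eq_neg_of_add_eq_zero_left (hx.mul_right_eq_zero.mp ?_), fun h2 => ?_⟩
  · rw [mul_add, mul_one, ← pow_succ', h]
  · exact ⟨⟨x, -x, by rw [mul_neg, ← sq, h2, neg_neg], by rw [neg_mul, ← sq, h2, neg_neg]⟩, rfl⟩

theorem Module.End.ker_ne_bot_iff_sq_ne_neg_one {K V : Type*} [Field K] [AddCommGroup V]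
    [Module K V] [FiniteDimensional K V] {f : Module.End K V} (hf : f ^ 3 + f = 0) :
    LinearMap.ker f ≠ ⊥ ↔ f ^ 2 ≠ -1 := by
  rw [ne_eq, ← LinearMap.isUnit_iff_ker_eq_bot,
    isUnit_iff_sq_eq_neg_one_of_pow_three_add_self_eq_zero hf]

theorem Ideal.Quotient.isLocalRing_pow {S : Type*} [CommRing S] (M : Ideal S) [M.IsMaximal]
    {n : ℕ} (hn : n ≠ 0) : IsLocalRing (S ⧸ M ^ n) := by
  have : Nontrivial (S ⧸ M ^ n) := Ideal.Quotient.nontrivial_iff.mpr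
    (ne_top_of_le_ne_top (IsMaximal.ne_top ‹_›) (Ideal.pow_le_self hn))
  refine .of_isUnit_or_isUnit_one_sub_self fun a => ?_
  obtain ⟨x, rfl⟩ := Ideal.Quotient.mk_surjective a
  rw [← map_one (Ideal.Quotient.mk _), ← map_sub, isUnit_mk_pow_iff_notMem M hn,
    isUnit_mk_pow_iff_notMem M hn, ← not_and_or]
  exact fun h => IsMaximal.ne_top ‹_›
    ((Ideal.eq_top_iff_one _).mpr (by simpa using M.add_mem h.1 h.2))

theorem isUnit_two_of_algebra (K : Type*) {A : Type*} [Field K] [NeZero (2 : K)] [Semiring A]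
    [Algebra K A] : IsUnit (2 : A) := by
  simpa only [map_ofNat] using (isUnit_iff_ne_zero.mpr (two_ne_zero' K)).map (algebraMap K A)

theorem Irreducible.exists_dvd_sq_add_one {p : ℝ[X]} (hp : Irreducible p) (hdeg : p.natDegree = 2) :
    ∃ q : ℝ[X], p ∣ q ^ 2 + 1 := by
  set a := p.coeff 2
  set b := p.coeff 1
  set c := p.coeff 0
  have ha : a ≠ 0 := by
    simpa [a, ← hdeg] using leadingCoeff_ne_zero.mpr hp.ne_zero
  have hp_eq : p = C a * X ^ 2 + C b * X + C c :=
    eq_quadratic_of_degree_le_two (natDegree_le_iff_degree_le.mp hdeg.le)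
  have hd : discrim a b c < 0 := by
    by_contra! hd
    obtain ⟨x, hx⟩ := exists_quadratic_eq_zero ha ⟨√(discrim a b c), (Real.mul_self_sqrt hd).symm⟩
    have hroot : p.IsRoot x := by
      rw [IsRoot, hp_eq]; simp only [eval_add, eval_mul, eval_pow, eval_C, eval_X]
      linear_combination hx
    have := degree_eq_one_of_irreducible_of_root hp hroot
    rw [degree_eq_natDegree hp.ne_zero, hdeg] at this
    exact absurd this (by decide)
  set e := (√(-discrim a b c))⁻¹
  have he : C (-discrim a b c) * C e ^ 2 = 1 := by
    rw [← C_pow, ← C_mul, inv_pow, Real.sq_sqrt (by linarith), mul_inv_cancel₀ (by linarith), C_1]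
  -- `q = (2aX + b) / √(-discrim a b c)` works because `(2aX + b)² - discrim a b c = 4a • p`
  refine ⟨C e * (2 * C a * X + C b), 4 * C a * C e ^ 2, ?_⟩
  rw [hp_eq]
  simp only [discrim, C_neg, C_sub, C_mul, C_pow, map_ofNat] at he
  linear_combination -he

theorem exists_sq_eq_neg_one_of_isNilpotent {A : Type*} [CommRing A] (h2 : IsUnit (2 : A))
    {x : A} (hx : IsNilpotent (x ^ 2 + 1)) : ∃ j : A, j ^ 2 = -1 := by
  have hxu : IsUnit x := (isUnit_pow_iff two_ne_zero).mp <| by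
    simpa using hx.isUnit_add_left_of_commute isUnit_one.neg (Commute.all _ _)
  have hderiv : aeval x (derivative (X ^ 2 + 1 : A[X])) = 2 * x := by simp; ring
  obtain ⟨j, ⟨-, hj⟩, -⟩ := existsUnique_nilpotent_sub_and_aeval_eq_zero (P := (X ^ 2 + 1 : A[X]))
    (by simpa using hx) (hderiv ▸ h2.mul hxu)
  exact ⟨j, by simpa [add_eq_zero_iff_eq_neg] using hj⟩

theorem Irreducible.exists_sq_eq_neg_one_quotient_pow {p : ℝ[X]} (hp : Irreducible p)
    (hdeg : p.natDegree = 2) (n : ℕ) : ∃ j : ℝ[X] ⧸ Ideal.span {p} ^ n, j ^ 2 = -1 := by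
  obtain ⟨q, hq⟩ := hp.exists_dvd_sq_add_one hdeg
  refine exists_sq_eq_neg_one_of_isNilpotent (isUnit_two_of_algebra ℝ)
    (x := Ideal.Quotient.mk _ q) ⟨n, ?_⟩
  rw [← map_pow, ← map_one (Ideal.Quotient.mk _), ← map_add, ← map_pow,
    Ideal.Quotient.eq_zero_iff_mem]
  exact Ideal.pow_mem_pow (Ideal.mem_span_singleton.mpr hq) n

theorem Polynomial.IsRoot.not_exists_sq_eq_neg_one_quotient_pow {p : ℝ[X]} {r : ℝ} (hr : p.IsRoot r)
    {n : ℕ} (hn : n ≠ 0) : ¬∃ j : ℝ[X] ⧸ Ideal.span {p} ^ n, j ^ 2 = -1 := by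
  rintro ⟨j, hj⟩
  let φ : ℝ[X] ⧸ Ideal.span {p} ^ n →+* ℝ := Ideal.Quotient.lift _ (evalRingHom r) fun q hq => by
    obtain ⟨t, rfl⟩ := Ideal.mem_span_singleton.mp (Ideal.pow_le_self hn hq)
    simp [hr.eq_zero]
  have hφ : φ j ^ 2 = -1 := by rw [← map_pow, hj, map_neg, map_one]
  nlinarith [sq_nonneg (φ j)]

theorem Irreducible.exists_sq_eq_neg_one_quotient_pow_iff {p : ℝ[X]} (hp : Irreducible p) {n : ℕ}
    (hn : n ≠ 0) : (∃ j : ℝ[X] ⧸ Ideal.span {p} ^ n, j ^ 2 = -1) ↔ p.natDegree = 2 := by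
  refine ⟨fun h => by_contra fun hdeg => ?_,
    fun hdeg => hp.exists_sq_eq_neg_one_quotient_pow hdeg n⟩
  have hdeg1 : p.degree = 1 := by
    have := hp.natDegree_pos
    have := hp.natDegree_le_two
    exact (degree_eq_iff_natDegree_eq (n := 1) hp.ne_zero).mpr (by omega)
  obtain ⟨r, hr⟩ := exists_root_of_degree_eq_one hdeg1
  exact hr.not_exists_sq_eq_neg_one_quotient_pow hn h

section PrimaryComponents

variable {R : Type*} [CommRing R] [IsDomain R] [IsPrincipalIdealRing R] [NormalizationMonoid R]
  [DecidableEq R]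

abbrev PrimaryComponents (r : R) : Type _ :=
  ∀ p : (normalizedFactors r).toFinset,
    R ⧸ Ideal.span {(p : R)} ^ (normalizedFactors r).count (p : R)

noncomputable def quotientSpanEquivPrimaryComponents {r : R} (hr : r ≠ 0) :
    R ⧸ Ideal.span {r} ≃+* PrimaryComponents r := by
  refine IsDedekindDomain.quotientEquivPiOfFinsetProdEq (s := (normalizedFactors r).toFinset) _
    (fun p => Ideal.span {p}) (fun p => (normalizedFactors r).count p) (fun p hp => ?_)
    (fun p hp q hq hpq h => hpq ?_) ?_
  · rw [Multiset.mem_toFinset] at hp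
    have hp0 := ne_zero_of_mem_normalizedFactors hp
    exact Ideal.prime_of_isPrime (by simpa using hp0)
      ((Ideal.span_singleton_prime hp0).mpr (prime_of_normalized_factor p hp))
  · exact (Ideal.span_singleton_eq_span_singleton.mp h).eq_of_normalized
      (normalize_normalized_factor p (Multiset.mem_toFinset.mp hp))
      (normalize_normalized_factor q (Multiset.mem_toFinset.mp hq))
  · simp only [Ideal.span_singleton_pow, Ideal.prod_span_singleton, ← Finset.prod_multiset_count]
    exact Ideal.span_singleton_eq_span_singleton.mpr (prod_normalizedFactors hr)

instance (r : R) (p : (normalizedFactors r).toFinset) :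
    IsLocalRing (R ⧸ Ideal.span {(p : R)} ^ (normalizedFactors r).count (p : R)) :=
  have := PrincipalIdealRing.isMaximal_of_irreducible
    (irreducible_of_normalized_factor _ (Multiset.mem_toFinset.mp p.2))
  Ideal.Quotient.isLocalRing_pow _ (Multiset.count_ne_zero.mpr (Multiset.mem_toFinset.mp p.2))

end PrimaryComponents

theorem minpoly.exists_injective_primaryComponents {K A : Type*} [Field K] [DecidableEq K]
    [Ring A] [Algebra K A] {x : A} (hx : IsIntegral K x) :
    ∃ ψ : PrimaryComponents (minpoly K x) →+* A,
      Function.Injective ψ ∧ Set.range ψ = Set.range (Polynomial.aeval (R := K) x) := by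
  let φ : K[X] →+* A := (Polynomial.aeval x).toRingHom
  let e : K[X] ⧸ RingHom.ker φ ≃+* PrimaryComponents (minpoly K x) :=
    (Ideal.quotEquivOfEq (minpoly.ker_aeval_eq_span_minpoly K x)).trans
      (quotientSpanEquivPrimaryComponents (minpoly.ne_zero hx))
  refine ⟨φ.kerLift.comp e.symm.toRingHom, (RingHom.kerLift_injective φ).comp e.symm.injective, ?_⟩
  rw [RingHom.coe_comp, RingEquiv.toRingHom_eq_coe, RingEquiv.coe_toRingHom,
    e.symm.surjective.range_comp, ← Ideal.Quotient.mk_surjective.range_comp]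
  rfl

namespace PrimaryComponents

variable (f : ℝ[X])

theorem isUnit_two (p : (normalizedFactors f).toFinset) :
    IsUnit (2 : ℝ[X] ⧸ Ideal.span {(p : ℝ[X])} ^ (normalizedFactors f).count (p : ℝ[X])) :=
  isUnit_two_of_algebra ℝ

theorem exists_sq_eq_neg_one_component_iff (p : (normalizedFactors f).toFinset) :
    (∃ j : ℝ[X] ⧸ Ideal.span {(p : ℝ[X])} ^ (normalizedFactors f).count (p : ℝ[X]), j ^ 2 = -1) ↔
      (p : ℝ[X]).natDegree = 2 :=
  Irreducible.exists_sq_eq_neg_one_quotient_pow_iff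
    (irreducible_of_normalized_factor _ (Multiset.mem_toFinset.mp p.2))
    (Multiset.count_ne_zero.mpr (Multiset.mem_toFinset.mp p.2))

theorem exists_sq_eq_neg_one_iff :
    (∃ x : PrimaryComponents f, x ^ 2 = -1) ↔
      ∀ p ∈ (normalizedFactors f).toFinset, p.natDegree = 2 := by
  simp only [Pi.exists_sq_eq_neg_one_iff, exists_sq_eq_neg_one_component_iff, Subtype.forall]

theorem ncard_setOf_sq_eq_one :
    {x : PrimaryComponents f | x ^ 2 = 1}.ncard = 2 ^ (normalizedFactors f).toFinset.card := by
  rw [Pi.ncard_setOf_sq_eq_one (isUnit_two f), Fintype.card_coe]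

theorem ncard_setOf_pow_three_eq_self :
    {x : PrimaryComponents f | x ^ 3 = x}.ncard = 3 ^ (normalizedFactors f).toFinset.card := by
  rw [Pi.ncard_setOf_pow_three_eq_self (isUnit_two f), Fintype.card_coe]

theorem ncard_setOf_sq_eq_neg_one (h : ∀ p ∈ (normalizedFactors f).toFinset, p.natDegree = 2) :
    {x : PrimaryComponents f | x ^ 2 = -1}.ncard = 2 ^ (normalizedFactors f).toFinset.card := by
  rw [Pi.ncard_setOf_sq_eq_neg_one (isUnit_two f)
    (fun p => (exists_sq_eq_neg_one_component_iff f p).mpr (h p p.2)), Fintype.card_coe]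

theorem ncard_setOf_pow_three_add_self_eq_zero :
    {x : PrimaryComponents f | x ^ 3 + x = 0}.ncard =
      3 ^ ((normalizedFactors f).toFinset.filter fun p => p.natDegree = 2).card := by
  rw [Pi.ncard_setOf_pow_three_add_self_eq_zero (isUnit_two f)]
  simp only [exists_sq_eq_neg_one_component_iff]
  rw [Finset.prod_coe_sort (normalizedFactors f).toFinset fun p => if p.natDegree = 2 then 3 else 1,
    Finset.prod_ite, Finset.prod_const, Finset.prod_const_one, mul_one]

end PrimaryComponents

theorem Set.ncard_setOf_mem_range_and {α β : Type*} {f : α → β} (hf : Function.Injective f)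
    (Q : β → Prop) : {b | b ∈ Set.range f ∧ Q b}.ncard = {a | Q (f a)}.ncard := by
  rw [← Set.ncard_image_of_injective _ hf]
  congr 1
  ext b
  constructor
  · rintro ⟨⟨a, rfl⟩, hb⟩
    exact ⟨a, hb, rfl⟩
  · rintro ⟨a, ha, rfl⟩
    exact ⟨⟨a, rfl⟩, ha⟩

theorem stmt_3 (V : Type*) [AddCommGroup V] [Module ℝ V] [FiniteDimensional ℝ V]
    [Nontrivial V]
    (θ : Module.End ℝ V)
    (stil s : ℕ)
    (hstil : stil = (normalizedFactors (minpoly ℝ θ)).toFinset.card)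
    (hs : s = ((normalizedFactors (minpoly ℝ θ)).toFinset.filter
      (fun p => p.natDegree = 2)).card) :
    -- (1) canonical almost product structures
    {P : Module.End ℝ V | (∃ p : Polynomial ℝ, P = Polynomial.aeval θ p) ∧
      P ^ 2 = 1}.ncard = 2 ^ stil ∧
    -- (2) canonical almost complex structures
    ((∃ J : Module.End ℝ V, (∃ p : Polynomial ℝ, J = Polynomial.aeval θ p) ∧
      J ^ 2 = -1) ↔ s = stil) ∧
    (s = stil →
      {J : Module.End ℝ V | (∃ p : Polynomial ℝ, J = Polynomial.aeval θ p) ∧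
        J ^ 2 = -1}.ncard = 2 ^ s) ∧
    -- (3) canonical f-structures
    {f : Module.End ℝ V | (∃ p : Polynomial ℝ, f = Polynomial.aeval θ p) ∧
      f ^ 3 + f = 0 ∧ f ≠ 0}.ncard = 3 ^ s - 1 ∧
    (s = stil →
      {f : Module.End ℝ V | (∃ p : Polynomial ℝ, f = Polynomial.aeval θ p) ∧
        f ^ 3 + f = 0 ∧ f ^ 2 = -1}.ncard = 2 ^ s ∧
      {f : Module.End ℝ V | (∃ p : Polynomial ℝ, f = Polynomial.aeval θ p) ∧
        f ^ 3 + f = 0 ∧ f ≠ 0 ∧ LinearMap.ker f ≠ ⊥}.ncard = 3 ^ s - 2 ^ s - 1) ∧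
    -- (4) canonical h-structures
    {h : Module.End ℝ V | (∃ p : Polynomial ℝ, h = Polynomial.aeval θ p) ∧
      h ^ 3 = h}.ncard = 3 ^ stil := by
  obtain ⟨ψ, hψ, hrange⟩ :=
    minpoly.exists_injective_primaryComponents (Algebra.IsIntegral.isIntegral (R := ℝ) θ)
  have hmem (T : Module.End ℝ V) : (∃ p : ℝ[X], T = aeval θ p) ↔ T ∈ Set.range ψ := by
    simp only [hrange, Set.mem_range, eq_comm]
  have hcount (Q : Module.End ℝ V → Prop) :
      {T | (∃ p : ℝ[X], T = aeval θ p) ∧ Q T}.ncard = {x | Q (ψ x)}.ncard := by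
    simp only [hmem]
    exact Set.ncard_setOf_mem_range_and hψ Q
  have hneg (x) : ψ x = -1 ↔ x = -1 := by rw [← map_one ψ, ← map_neg, hψ.eq_iff]
  have hall : (∀ p ∈ (normalizedFactors (minpoly ℝ θ)).toFinset, p.natDegree = 2) ↔ s = stil := by
    rw [hs, hstil, Finset.card_filter_eq_iff]
  have hT : {x : PrimaryComponents (minpoly ℝ θ) | x ^ 3 + x = 0}.ncard = 3 ^ s :=
    hs ▸ PrimaryComponents.ncard_setOf_pow_three_add_self_eq_zero _
  have hU (h : s = stil) : {x : PrimaryComponents (minpoly ℝ θ) | x ^ 2 = -1}.ncard = 2 ^ s := by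
    rw [h, hstil]
    exact PrimaryComponents.ncard_setOf_sq_eq_neg_one _ (hall.mpr h)
  have := ψ.domain_nontrivial
  refine ⟨?_, ?_, fun h => ?_, ?_, fun h => ⟨?_, ?_⟩, ?_⟩
  · rw [hcount, hstil, ← PrimaryComponents.ncard_setOf_sq_eq_one]
    simp only [← map_pow, map_eq_one_iff ψ hψ]
  · rw [← hall, ← PrimaryComponents.exists_sq_eq_neg_one_iff]
    simp only [hmem, Set.exists_range_iff, ← map_pow, hneg]
  · rw [hcount, ← hU h]
    simp only [← map_pow, hneg]
  · rw [hcount, ← hT, ← ncard_setOf_pow_three_add_self_eq_zero_and_ne_zero]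
    simp only [← map_pow, ← map_add, ne_eq, map_eq_zero_iff ψ hψ]
  · rw [hcount, ← hU h, ← setOf_pow_three_add_self_eq_zero_and_sq_eq_neg_one]
    simp only [← map_pow, ← map_add, map_eq_zero_iff ψ hψ, hneg]
  · rw [hcount, ← hT, ← hU h, ← ncard_setOf_pow_three_add_self_eq_zero_and_ne_zero_and_sq_ne_neg_one
      (Set.finite_of_ncard_ne_zero (by rw [hU h]; positivity))]
    congr 1
    ext x
    simp only [Set.mem_ofPred_eq, ← map_pow, ← map_add, ne_eq, map_eq_zero_iff ψ hψ]
    refine and_congr_right fun hx => and_congr_right fun _ => ?_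
    rw [← ne_eq, Module.End.ker_ne_bot_iff_sq_ne_neg_one
      (by rw [← map_pow, ← map_add, hx, map_zero]), ← map_pow, ne_eq, hneg]
  · rw [hcount, hstil, ← PrimaryComponents.ncard_setOf_pow_three_eq_self]
    simp only [← map_pow, hψ.eq_iff]
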